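/- arXiv:2602.06882 — 3 statements merged into one kernel-verified Lean document; each statement's English description precedes it below -/
import Mathlib

section
/- Let A be a unital C*-algebra, b ∈ A self-adjoint, and p a projection in A with ‖p - b‖ < 1/2. Then there exists a projection q in the C*-subalgebra generated by b such that ‖q - b‖ ≤ 2‖p - b‖, and moreover p and q are Murray–von Neumann equivalent. -/
open StarAlgebra in
lemma mem_elemental_cfc_c {A : Type*} [CStarAlgebra A] (a : A) (f : ℂ → ℂ) :
    cfc f a ∈ elemental ℂ a := by
  refine cfc_cases (· ∈ elemental ℂ a) a f (zero_mem _) fun hf ha ↦ ?_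
  rw [cfcHom_eq_of_isStarNormal]
  exact SetLike.coe_mem _

open StarAlgebra in
lemma mem_elemental_cfc_r {A : Type*} [CStarAlgebra A] (a : A) (f : ℝ → ℝ)
    (ha : IsSelfAdjoint a) : cfc f a ∈ elemental ℂ a := by
  rw [cfc_real_eq_complex f ha]
  exact mem_elemental_cfc_c a _

lemma isClosed_centralizer {A : Type*} [CStarAlgebra A] (s : Set A) :
    IsClosed (StarSubalgebra.centralizer ℂ s : Set A) := by
  rw [StarSubalgebra.coe_centralizer]
  have : (s ∪ star s).centralizer = ⋂ g ∈ (s ∪ star s), {x : A | g * x = x * g} := by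
    ext x; simp only [Set.mem_centralizer_iff, Set.mem_iInter, Set.mem_setOf_eq]
  rw [this]
  exact isClosed_biInter fun g _ ↦ isClosed_eq (by fun_prop) (by fun_prop)

open StarAlgebra in
lemma commute_cfc_of_commute {A : Type*} [CStarAlgebra A] {a c : A}
    (ha : IsSelfAdjoint a) (hc : IsSelfAdjoint c) (hca : Commute c a) (f : ℝ → ℝ) :
    Commute c (cfc f a) := by
  have hmem : a ∈ StarSubalgebra.centralizer ℂ {c} := by
    rw [StarSubalgebra.mem_centralizer_iff]
    rintro g rfl
    exact ⟨hca.eq, by rw [hc.star_eq]; exact hca.eq⟩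
  have hle := elemental.le_of_mem (isClosed_centralizer {c}) hmem
  have h2 := hle (mem_elemental_cfc_r a f ha)
  rw [StarSubalgebra.mem_centralizer_iff] at h2
  exact (h2 c rfl).1


lemma spec_idem {A : Type*} [CStarAlgebra A] [Nontrivial A] {p : A}
    (hp2 : p * p = p) : ∀ t ∈ spectrum ℝ p, t = 0 ∨ t = 1 := by
  intro t ht
  have key : (Polynomial.aeval p) (Polynomial.X ^ 2 - Polynomial.X : Polynomial ℝ) = 0 := by
    simp [pow_two, hp2]
  have h := spectrum.subset_polynomial_aeval p
    (Polynomial.X ^ 2 - Polynomial.X : Polynomial ℝ) ⟨t, ht, rfl⟩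
  rw [key, spectrum.zero_eq] at h
  simp only [Polynomial.eval_sub, Polynomial.eval_pow, Polynomial.eval_X,
    Set.mem_singleton_iff] at h
  have : t * (t - 1) = 0 := by nlinarith [h]
  rcases mul_eq_zero.mp this with h | h
  · exact Or.inl h
  · exact Or.inr (by linarith)

lemma spec_near {A : Type*} [CStarAlgebra A] [Nontrivial A] {b p : A}
    (hb : IsSelfAdjoint b) (hp1 : IsSelfAdjoint p) (hp2 : p * p = p) :
    ∀ x ∈ spectrum ℝ b, |x| ≤ ‖p - b‖ ∨ |x - 1| ≤ ‖p - b‖ := by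
  intro x hx
  by_contra hcon
  push_neg at hcon
  obtain ⟨h0, h1⟩ := hcon
  set ε := ‖p - b‖ with hε
  have hε0 : 0 ≤ ε := norm_nonneg _
  have hne : ∀ t ∈ spectrum ℝ p, (fun t : ℝ ↦ x - t) t ≠ 0 := by
    intro t ht
    rcases spec_idem hp2 t ht with rfl | rfl
    · simp only [sub_zero]
      intro h; rw [h] at h0; simp at h0; linarith
    · intro h
      have : x - 1 = 0 := h
      rw [this] at h1; simp at h1; linarith
  let u : Aˣ := cfcUnits (fun t : ℝ ↦ x - t) p hne (by fun_prop) hp1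
  have hval : (u : A) = algebraMap ℝ A x - b + (b - p) := by
    have : (u : A) = cfc (fun t : ℝ ↦ x - t) p := rfl
    rw [this, cfc_sub (fun _ ↦ x) (fun t ↦ t) p, cfc_const x p, cfc_id' ℝ p]
    abel
  have hinv : (↑u⁻¹ : A) = cfc (fun t : ℝ ↦ (x - t)⁻¹) p := rfl
  set c : ℝ := max |x|⁻¹ |x - 1|⁻¹ with hc
  have hx0 : (0:ℝ) < |x| := lt_of_le_of_lt hε0 h0
  have hx1 : (0:ℝ) < |x - 1| := lt_of_le_of_lt hε0 h1
  have hc0 : (0:ℝ) ≤ c := le_max_of_le_left (inv_nonneg.mpr (abs_nonneg x))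
  have hnormuinv : ‖(↑u⁻¹ : A)‖ ≤ c := by
    rw [hinv]
    apply norm_cfc_le hc0
    intro t ht
    rcases spec_idem hp2 t ht with rfl | rfl
    · rw [sub_zero, Real.norm_eq_abs, abs_inv]
      exact le_max_left _ _
    · rw [Real.norm_eq_abs, abs_inv]
      exact le_max_right _ _
  have hupos : 0 < ‖(↑u⁻¹ : A)‖ := Units.norm_pos u⁻¹
  have hεc : ε * c < 1 := by
    rw [hc, mul_max_of_nonneg _ _ hε0]
    apply max_lt
    · rw [mul_inv_lt_iff₀ hx0]; simpa using h0
    · rw [mul_inv_lt_iff₀ hx1]; simpa using h1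
  have hlt : ‖(algebraMap ℝ A x - b) - (u : A)‖ < ‖(↑u⁻¹ : A)‖⁻¹ := by
    have h2 : ‖(algebraMap ℝ A x - b) - (u : A)‖ = ε := by
      rw [hval]
      simp only [sub_add_cancel_left, norm_neg]
      rw [norm_sub_rev]
    rw [h2, inv_eq_one_div, lt_div_iff₀ hupos]
    exact lt_of_le_of_lt (mul_le_mul_of_nonneg_left hnormuinv hε0) hεc
  exact (spectrum.mem_iff.mp hx) (u.ofNearby _ hlt).isUnit

/-- If `b` is self-adjoint and `p` is a projection with `‖p - b‖ < 1/2` in a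
unital C*-algebra, then there is a projection `q ∈ C*(b)` with `‖q - b‖ ≤ 2‖p - b‖`, and
`p` and `q` are Murray–von Neumann equivalent. -/
theorem stmt3 {A : Type*} [CStarAlgebra A] (b p : A)
    (hb : IsSelfAdjoint b) (hp1 : IsSelfAdjoint p) (hp2 : p * p = p)
    (hclose : ‖p - b‖ < 1 / 2) :
    ∃ q ∈ StarAlgebra.elemental ℂ b, IsSelfAdjoint q ∧ q * q = q ∧
      ‖q - b‖ ≤ 2 * ‖p - b‖ ∧ ∃ v : A, star v * v = p ∧ v * star v = q := by
  by_cases hA : Subsingleton A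
  · refine ⟨b, StarAlgebra.elemental.self_mem ℂ b, hb, Subsingleton.elim _ _, ?_, 0,
      Subsingleton.elim _ _, Subsingleton.elim _ _⟩
    rw [sub_self, norm_zero]
    positivity
  · rw [not_subsingleton_iff_nontrivial] at hA
    set ε := ‖p - b‖ with hε
    have hε0 : 0 ≤ ε := norm_nonneg _
    have hden : (0:ℝ) < 1 - 2 * ε := by linarith
    set f : ℝ → ℝ := fun x ↦ min 1 (max 0 ((x - ε) / (1 - 2 * ε))) with hf
    have hf_cont : Continuous f := by fun_prop
    have hfspec : ∀ x ∈ spectrum ℝ b, (f x = 0 ∧ |x| ≤ ε) ∨ (f x = 1 ∧ |x - 1| ≤ ε) := by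
      intro x hx
      rcases spec_near hb hp1 hp2 x hx with h | h
      · left
        refine ⟨?_, h⟩
        have hx' : x ≤ ε := le_of_abs_le h
        have : (x - ε) / (1 - 2 * ε) ≤ 0 := div_nonpos_iff.mpr (Or.inr ⟨by linarith, hden.le⟩)
        simp [hf, max_eq_left this, min_eq_right zero_le_one]
      · right
        refine ⟨?_, h⟩
        have hx' : 1 - ε ≤ x := by
          have := abs_le.mp h
          linarith [this.1]
        have h1 : (1:ℝ) ≤ (x - ε) / (1 - 2 * ε) := by
          rw [le_div_iff₀ hden]; linarith
        have h2 : (1:ℝ) ≤ max 0 ((x - ε) / (1 - 2 * ε)) := le_max_of_le_right h1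
        simp [hf, min_eq_left h2]
    set q : A := cfc f b with hq
    have hq_mem : q ∈ StarAlgebra.elemental ℂ b := mem_elemental_cfc_r b f hb
    have hq_sa : IsSelfAdjoint q := cfc_predicate f b
    have hq2 : q * q = q := by
      rw [hq, ← cfc_mul f f b hf_cont.continuousOn hf_cont.continuousOn]
      exact cfc_congr fun x hx ↦ by rcases hfspec x hx with ⟨h, _⟩ | ⟨h, _⟩ <;> simp [h]
    have hqb : ‖q - b‖ ≤ ε := by
      have : q - b = cfc (fun x ↦ f x - x) b := by
        rw [cfc_sub f (fun x ↦ x) b hf_cont.continuousOn (continuous_id.continuousOn), cfc_id' ℝ b hb]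
      rw [this]
      apply norm_cfc_le hε0
      intro x hx
      rcases hfspec x hx with ⟨h, h'⟩ | ⟨h, h'⟩
      · rw [h, Real.norm_eq_abs, zero_sub, abs_neg]; exact h'
      · rw [h, Real.norm_eq_abs, abs_sub_comm]; exact h'
    refine ⟨q, hq_mem, hq_sa, hq2, by linarith, ?_⟩
    -- Murray-von Neumann equivalence
    have hpq : ‖p - q‖ < 1 := by
      have h := dist_triangle p b q
      rw [dist_eq_norm, dist_eq_norm, dist_eq_norm] at h
      rw [norm_sub_rev b q] at h
      linarith
    set z : A := q * p + (1 - q) * (1 - p) with hz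
    have hz1 : z - 1 = (2 * q - 1) * (p - q) + 2 * (q * q - q) := by rw [hz]; noncomm_ring
    have hz1' : z - 1 = (2 * q - 1) * (p - q) := by rw [hz1, hq2]; simp
    have h2q_sa : IsSelfAdjoint (2 * q - 1) := by
      rw [isSelfAdjoint_iff, two_mul]
      simp [star_sub, star_add, hq_sa.star_eq]
    have h2q_norm : ‖2 * q - 1‖ ≤ 1 := by
      have hsq : (2 * q - 1) * (2 * q - 1) = 4 * (q * q) - 4 * q + 1 := by noncomm_ring
      rw [hq2] at hsq
      have hsq' : (2 * q - 1) * (2 * q - 1) = 1 := by rw [hsq]; noncomm_ring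
      have hnorm := CStarRing.norm_star_mul_self (x := 2 * q - 1)
      rw [h2q_sa.star_eq, hsq', norm_one] at hnorm
      nlinarith [norm_nonneg (2 * q - 1)]
    have hz_norm : ‖1 - z‖ < 1 := by
      rw [norm_sub_rev, hz1']
      calc ‖(2 * q - 1) * (p - q)‖ ≤ ‖2 * q - 1‖ * ‖p - q‖ := norm_mul_le _ _
      _ ≤ 1 * ‖p - q‖ := by
          apply mul_le_mul_of_nonneg_right h2q_norm (norm_nonneg _)
      _ < 1 := by rw [one_mul]; exact hpq
    set zU : Aˣ := Units.oneSub (1 - z) hz_norm with hzU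
    have hzU_val : (zU : A) = z := by rw [hzU, Units.val_oneSub]; abel
    have hz_p : z * p = q * z := by
      have e1 : z * p = q * (p * p) + (1 - q) * (p - p * p) := by rw [hz]; noncomm_ring
      have e2 : q * z = (q * q) * p + (q - q * q) * (1 - p) := by rw [hz]; noncomm_ring
      rw [hp2] at e1
      rw [hq2] at e2
      rw [e1, e2]; noncomm_ring
    set w : A := star z * z with hw
    have hw_sa : IsSelfAdjoint w := IsSelfAdjoint.star_mul_self z
    have hw_unit : IsUnit w := by
      rw [hw, ← hzU_val, ← Units.coe_star]
      exact (star zU * zU).isUnit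
    have hps_z : p * star z = star z * q := by
      have := congrArg star hz_p
      rw [star_mul, star_mul, hp1.star_eq, hq_sa.star_eq] at this
      exact this
    have hw_comm : Commute p w := by
      show p * w = w * p
      rw [hw]
      calc p * (star z * z) = (p * star z) * z := by rw [mul_assoc]
      _ = star z * (q * z) := by rw [hps_z, mul_assoc]
      _ = star z * (z * p) := by rw [hz_p]
      _ = (star z * z) * p := by rw [mul_assoc]
    have hspec_w : ∀ t ∈ spectrum ℝ w, 0 < t := by
      intro t ht
      have h1 : 0 ≤ t := spectrum_star_mul_self_nonneg t (hw ▸ ht)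
      have h2 : t ≠ 0 := fun h ↦ spectrum.zero_notMem ℝ hw_unit (h ▸ ht)
      exact h1.lt_of_ne' h2
    set g : ℝ → ℝ := fun t ↦ (Real.sqrt t)⁻¹ with hg
    have hg_cont : ContinuousOn g (spectrum ℝ w) := by
      apply ContinuousOn.inv₀ Real.continuous_sqrt.continuousOn
      intro t ht
      exact ne_of_gt (Real.sqrt_pos.mpr (hspec_w t ht))
    set s : A := cfc g w with hs
    have hs_sa : IsSelfAdjoint s := cfc_predicate g w
    have hss_w : s * s * w = 1 := by
      rw [hs]
      nth_rewrite 3 [← cfc_id ℝ w hw_sa]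
      rw [← cfc_mul g g w hg_cont hg_cont,
        ← cfc_mul (fun x => g x * g x) id w (hg_cont.mul hg_cont) continuousOn_id,
        ← cfc_const_one ℝ w hw_sa]
      apply cfc_congr
      intro t ht
      have h0 : 0 < t := hspec_w t ht
      show (√t)⁻¹ * (√t)⁻¹ * id t = 1
      rw [← mul_inv, Real.mul_self_sqrt h0.le, id_eq, inv_mul_cancel₀ h0.ne']
    have hcomm_ps : Commute p s := commute_cfc_of_commute hw_sa hp1 hw_comm g
    have hcomm_ws : Commute w s := commute_cfc_of_commute hw_sa hw_sa (Commute.refl w) g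
    -- the partial isometry
    refine ⟨z * s * p, ?_, ?_⟩
    · -- star v * v = p
      have hstar : star (z * s * p) = p * s * star z := by
        rw [star_mul, star_mul, hp1.star_eq, hs_sa.star_eq, mul_assoc]
      rw [hstar]
      have hsws : s * w * s = 1 := by
        have h' : s * w * s = w * (s * s) := by
          rw [← hcomm_ws.eq, mul_assoc]
        rw [h', (hcomm_ws.mul_right hcomm_ws).eq]
        exact hss_w
      calc p * s * star z * (z * s * p) = p * (s * w * s) * p := by
            rw [hw]; noncomm_ring
      _ = p * p := by rw [hsws]; rw [mul_one]
      _ = p := hp2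
    · -- v * star v = q
      have hstar : star (z * s * p) = p * s * star z := by
        rw [star_mul, star_mul, hp1.star_eq, hs_sa.star_eq, mul_assoc]
      rw [hstar]
      have key : z * (s * s * star z) = 1 := by
        have h1 : (s * s * star z) * z = 1 := by rw [mul_assoc]; exact hss_w
        have h2 : (s * s * star z) = ↑zU⁻¹ :=
          (Units.inv_eq_of_mul_eq_one_left (by rw [hzU_val]; exact h1)).symm
        rw [h2, ← hzU_val, Units.mul_inv]
      calc z * s * p * (p * s * star z) = z * s * (p * p) * s * star z := by noncomm_ring
      _ = z * s * p * s * star z := by rw [hp2]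
      _ = z * (s * p) * s * star z := by noncomm_ring
      _ = z * (p * s) * s * star z := by rw [hcomm_ps.eq]
      _ = (z * p) * (s * s * star z) := by noncomm_ring
      _ = (q * z) * (s * s * star z) := by rw [hz_p]
      _ = q * (z * (s * s * star z)) := by noncomm_ring
      _ = q := by rw [key, mul_one]
end

section
/- Let A be a unital C*-algebra and suppose p₁, …, pₙ and q₁, …, qₙ are projections in A with p_i p_j = 0 and q_i q_j = 0 whenever i ≠ j, and max_j ‖p_j − q_j‖ < 2^{-(n+k+2)}. Then there is a partial isometry v in the C*-algebra generated by {p₁,…,pₙ,q₁,…,qₙ,1} such that v* p_j v = q_j for all j and max_j ‖p_j − p_j v q_j‖ < 2^{-k}. Furthermore, if Σ_j p_j = 1, then v is a unitary and ‖v − 1‖ < 2^{-k}. -/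
open StarAlgebra Pointwise


lemma my_cfc_mem_elemental {A : Type*} [CStarAlgebra A] (a : A) (ha : IsSelfAdjoint a)
    (f : ℝ → ℝ) : cfc f a ∈ elemental ℂ a := by
  rw [cfc_real_eq_complex f ha]
  by_cases hg : ContinuousOn (fun x : ℂ => (f x.re : ℂ)) (spectrum ℂ a)
  · rw [cfc_apply (fun x : ℂ => (f x.re : ℂ)) a ha.isStarNormal hg,
      cfcHom_eq_of_isStarNormal]
    exact Subtype.coe_prop _
  · rw [cfc_apply_of_not_continuousOn a hg]
    exact zero_mem _

lemma my_commute_of_mem_elemental {A : Type*} [CStarAlgebra A] {a b x : A}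
    (hb : IsSelfAdjoint b) (hab : Commute b a) (hx : x ∈ elemental ℂ a) :
    Commute b x := by
  induction hx using StarAlgebra.elemental.induction_on with
  | self => exact hab
  | star_self =>
    have : Commute (star b) (star a) := hab.star_star
    rwa [hb.star_eq] at this
  | algebraMap r => exact Algebra.commute_algebraMap_right r b
  | add u hu v hv h1 h2 => exact h1.add_right h2
  | mul u hu v hv h1 h2 => exact h1.mul_right h2
  | closure s hs h v hv =>
    have hc : IsClosed {y : A | b * y = y * b} :=
      isClosed_eq (continuous_const.mul continuous_id) (continuous_id.mul continuous_const)
    exact closure_minimal (fun u hu => h u hu) hc hv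

lemma my_idem_aux {A : Type*} [Ring A] {P : A} (h : P * P = P) :
    ∀ x : A, P * (P * x) = P * x := fun x => by rw [← mul_assoc, h]

/-- algebraic: `P * ((P-Q)*(P-Q)) = P - P*Q*P = ((P-Q)*(P-Q)) * P` -/
lemma my_mul_dd {A : Type*} [Ring A] {P Q : A} (hPi : P * P = P) (hQi : Q * Q = Q) :
    P * ((P - Q) * (P - Q)) = P - P * Q * P ∧
    ((P - Q) * (P - Q)) * P = P - P * Q * P := by
  have h1 : (P - Q) * (P - Q) = P * P - P * Q - Q * P + Q * Q := by noncomm_ring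
  constructor <;>
  · rw [h1, hPi, hQi]
    simp only [mul_add, mul_sub, add_mul, sub_mul, mul_assoc, hPi, hQi,
      my_idem_aux hPi, my_idem_aux hQi]
    abel

lemma my_pair {A : Type*} [CStarAlgebra A] [Nontrivial A] {P Q : A}
    (hP : IsSelfAdjoint P) (hPi : P * P = P) (hQ : IsSelfAdjoint Q) (hQi : Q * Q = Q)
    (hsmall : ‖P - Q‖ ≤ 1 / 4) :
    ∃ r : A, r ∈ elemental ℂ (1 - (P - Q) * (P - Q)) ∧ IsSelfAdjoint r ∧
      Commute P r ∧ Commute Q r ∧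
      r * r * (1 - (P - Q) * (P - Q)) = 1 ∧
      (1 - (P - Q) * (P - Q)) * (r * r) = 1 ∧
      ‖1 - r‖ ≤ ‖P - Q‖ ^ 2 := by
  have hd : IsSelfAdjoint (P - Q) := hP.sub hQ
  set a : A := 1 - (P - Q) * (P - Q) with ha_def
  have ha : IsSelfAdjoint a := by
    rw [ha_def, IsSelfAdjoint, star_sub, star_one, star_mul, hd.star_eq]
  have hε0 : (0 : ℝ) ≤ ‖P - Q‖ := norm_nonneg _
  -- spectrum bound
  have hsq : (P - Q) * (P - Q) = cfc (fun x : ℝ => x * x) (P - Q) := by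
    rw [cfc_mul (fun x : ℝ => x) (fun x : ℝ => x) (P - Q) continuousOn_id continuousOn_id,
      cfc_id' ℝ (P - Q) hd]
  have hspec_dd : spectrum ℝ ((P - Q) * (P - Q)) ⊆ Set.Icc 0 (‖P - Q‖ ^ 2) := by
    rw [hsq, cfc_map_spectrum (fun x : ℝ => x * x) (P - Q) hd
      (continuousOn_id.mul continuousOn_id)]
    rintro y ⟨x, hx, rfl⟩
    have hxb : |x| ≤ ‖P - Q‖ := by
      simpa [Real.norm_eq_abs] using spectrum.norm_le_norm_of_mem hx
    have := abs_nonneg x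
    constructor
    · simpa using mul_self_nonneg x
    · show x * x ≤ ‖P - Q‖ ^ 2
      nlinarith [neg_abs_le x, le_abs_self x]
  have hspec : spectrum ℝ a ⊆ Set.Icc (1 - ‖P - Q‖ ^ 2) 1 := by
    intro x hx
    have h1 : spectrum ℝ a = {(1 : ℝ)} - spectrum ℝ ((P - Q) * (P - Q)) := by
      rw [spectrum.singleton_sub_eq, map_one, ha_def]
    rw [h1] at hx
    obtain ⟨o, ho, y, hy, rfl⟩ := hx
    rw [Set.mem_singleton_iff] at ho
    subst ho
    obtain ⟨hy0, hy1⟩ := hspec_dd hy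
    constructor
    · show 1 - ‖P - Q‖ ^ 2 ≤ 1 - y
      linarith
    · show 1 - y ≤ 1
      linarith
  have hpos : ∀ x ∈ spectrum ℝ a, (15/16 : ℝ) ≤ x := by
    intro x hx
    have h := (hspec hx).1
    nlinarith
  set f : ℝ → ℝ := fun x => (Real.sqrt x)⁻¹ with hf_def
  have hcont : ContinuousOn f (spectrum ℝ a) := by
    apply ContinuousOn.inv₀ Real.continuous_sqrt.continuousOn
    intro x hx
    have := hpos x hx
    positivity
  have key : cfc f a * cfc f a * a = 1 := by
    have h2 : cfc (fun x : ℝ => f x * f x * x) a = cfc f a * cfc f a * a := by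
      rw [cfc_mul (fun x : ℝ => f x * f x) (fun x : ℝ => x) a (hcont.mul hcont)
        continuousOn_id, cfc_mul f f a hcont hcont, cfc_id' ℝ a ha]
    rw [← h2, ← cfc_one (R := ℝ) a ha]
    apply cfc_congr
    intro x hx
    have hx15 := hpos x hx
    have hx0 : (0 : ℝ) < x := by linarith
    show (Real.sqrt x)⁻¹ * (Real.sqrt x)⁻¹ * x = 1
    rw [← mul_inv, Real.mul_self_sqrt hx0.le]
    exact inv_mul_cancel₀ hx0.ne'
  have hmem := my_cfc_mem_elemental a ha f
  have hcomm_a : Commute a (cfc f a) := my_commute_of_mem_elemental ha (Commute.refl a) hmem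
  refine ⟨cfc f a, hmem, cfc_predicate f a, ?_, ?_, key, ?_, ?_⟩
  · -- Commute P r
    apply my_commute_of_mem_elemental hP ?_ hmem
    obtain ⟨h1, h2⟩ := my_mul_dd hPi hQi
    have hPdd : Commute P ((P - Q) * (P - Q)) := h1.trans h2.symm
    rw [ha_def]
    exact (Commute.one_right P).sub_right hPdd
  · -- Commute Q r
    apply my_commute_of_mem_elemental hQ ?_ hmem
    obtain ⟨h1, h2⟩ := my_mul_dd hQi hPi
    have e : (Q - P) * (Q - P) = (P - Q) * (P - Q) := by noncomm_ring
    rw [e] at h1 h2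
    have hQdd : Commute Q ((P - Q) * (P - Q)) := h1.trans h2.symm
    rw [ha_def]
    exact (Commute.one_right Q).sub_right hQdd
  · -- a * (r * r) = 1
    calc a * (cfc f a * cfc f a) = cfc f a * cfc f a * a :=
          (hcomm_a.mul_right hcomm_a).eq
      _ = 1 := key
  · -- norm bound
    have h1 : (1 : A) - cfc f a = cfc (fun x : ℝ => 1 - f x) a := by
      rw [cfc_sub (fun _ : ℝ => (1 : ℝ)) f a continuousOn_const hcont, cfc_const_one ℝ a ha]
    rw [h1]
    apply norm_cfc_le (by positivity)
    intro x hx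
    obtain ⟨hxl, hxu⟩ := hspec hx
    have hx15 := hpos x hx
    have hx0 : (0 : ℝ) < x := by linarith
    have hs2 : Real.sqrt x ^ 2 = x := Real.sq_sqrt hx0.le
    have hs_pos : 0 < Real.sqrt x := Real.sqrt_pos.mpr hx0
    have hs_le1 : Real.sqrt x ≤ 1 := by
      simpa using Real.sqrt_le_sqrt hxu
    have hinv_ge1 : 1 ≤ (Real.sqrt x)⁻¹ := by
      rw [inv_eq_one_div, le_div_iff₀ hs_pos]
      linarith
    have hsmall' : ‖P - Q‖ ^ 2 ≤ 1 / 16 := by nlinarith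
    have hinv_le : (Real.sqrt x)⁻¹ ≤ 1 + ‖P - Q‖ ^ 2 := by
      rw [inv_eq_one_div, div_le_iff₀ hs_pos]
      nlinarith [sq_nonneg (Real.sqrt x - 1), sq_nonneg (‖P - Q‖ ^ 2)]
    show ‖1 - (Real.sqrt x)⁻¹‖ ≤ ‖P - Q‖ ^ 2
    rw [Real.norm_eq_abs, abs_sub_comm, abs_of_nonneg (by linarith)]
    linarith

lemma my_comm_aux {A : Type*} [Semigroup A] {x y : A} (h : Commute x y) (z : A) :
    x * (y * z) = y * (x * z) := by rw [← mul_assoc, h.eq, mul_assoc]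

lemma my_idem_aux2 {A : Type*} [Ring A] {P : A} (h : P * P = P) :
    ∀ x : A, P * (P * x) = P * x := fun x => by rw [← mul_assoc, h]

lemma my_zero_aux {A : Type*} [Ring A] {x y : A} (h : x * y = 0) (z : A) :
    x * (y * z) = 0 := by rw [← mul_assoc, h, zero_mul]

lemma my_proj_norm_le_one {A : Type*} [CStarAlgebra A] {e : A}
    (he : IsSelfAdjoint e) (hi : e * e = e) : ‖e‖ ≤ 1 := by
  have h : ‖e‖ * ‖e‖ = ‖e‖ := by
    rw [← CStarRing.norm_star_mul_self, he.star_eq, hi]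
  nlinarith [norm_nonneg e]

lemma my_proj_small {A : Type*} [CStarAlgebra A] {e : A}
    (he : IsSelfAdjoint e) (hi : e * e = e) (hn : ‖e‖ < 1) : e = 0 := by
  have h : ‖e‖ * ‖e‖ = ‖e‖ := by
    rw [← CStarRing.norm_star_mul_self, he.star_eq, hi]
  have h0 : ‖e‖ = 0 := by nlinarith [norm_nonneg e]
  exact norm_eq_zero.mp h0

/-- intertwining close families of mutually orthogonal projections by a
partial isometry, which is a unitary close to 1 when the `p_j` sum to 1. -/
theorem stmt5 {A : Type*} [CStarAlgebra A] (n k : ℕ) (p q : Fin n → A)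
    (hp : ∀ j, IsSelfAdjoint (p j) ∧ p j * p j = p j)
    (hq : ∀ j, IsSelfAdjoint (q j) ∧ q j * q j = q j)
    (hportho : ∀ i j, i ≠ j → p i * p j = 0)
    (hqortho : ∀ i j, i ≠ j → q i * q j = 0)
    (hclose : ∀ j, ‖p j - q j‖ < (2 : ℝ) ^ (-(n + k + 2 : ℤ))) :
    ∃ v ∈ (StarAlgebra.adjoin ℂ
        (Set.range p ∪ Set.range q ∪ {1} : Set A)).topologicalClosure,
      (IsSelfAdjoint (star v * v) ∧ (star v * v) * (star v * v) = star v * v) ∧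
      (∀ j, star v * p j * v = q j) ∧
      (∀ j, ‖p j - p j * v * q j‖ < (2 : ℝ) ^ (-(k : ℤ))) ∧
      ((∑ j, p j) = 1 →
        star v * v = 1 ∧ v * star v = 1 ∧ ‖v - 1‖ < (2 : ℝ) ^ (-(k : ℤ))) := by
  have hkpos : (0:ℝ) < (2:ℝ) ^ (-(k:ℤ)) := by positivity
  obtain hA | hA := subsingleton_or_nontrivial A
  · refine ⟨1, one_mem _, ⟨?_, Subsingleton.elim _ _⟩, fun j => Subsingleton.elim _ _,
      fun j => ?_, fun _ => ⟨Subsingleton.elim _ _, Subsingleton.elim _ _, ?_⟩⟩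
    · rw [show star (1:A) * 1 = 0 from Subsingleton.elim _ _]
      exact IsSelfAdjoint.zero A
    · rw [show p j - p j * 1 * q j = 0 from Subsingleton.elim _ _, norm_zero]
      exact hkpos
    · rw [show (1:A) - 1 = 0 from Subsingleton.elim _ _, norm_zero]
      exact hkpos
  -- numerics
  have h2ne : (2:ℝ) ≠ 0 := by norm_num
  set δ : ℝ := (2:ℝ) ^ (-(n + k + 2 : ℤ)) with hδ_def
  have hδpos : (0:ℝ) < δ := by positivity
  have hδ4 : δ ≤ 1/4 := by
    rw [hδ_def]
    calc (2:ℝ) ^ (-(n + k + 2 : ℤ)) ≤ (2:ℝ) ^ (-2 : ℤ) :=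
          zpow_le_zpow_right₀ one_le_two (by omega)
      _ = 1/4 := by norm_num
  have h2δ : 2 * δ ≤ (2:ℝ) ^ (-(k:ℤ)) := by
    rw [hδ_def]
    calc 2 * (2:ℝ) ^ (-(n + k + 2 : ℤ)) = (2:ℝ) ^ (1 + -(n + k + 2 : ℤ)) := by
          rw [zpow_add₀ h2ne, zpow_one]
      _ ≤ (2:ℝ) ^ (-(k:ℤ)) := zpow_le_zpow_right₀ one_le_two (by omega)
  have hnle : (n:ℝ) ≤ (2:ℝ) ^ (n:ℤ) := by
    have := Nat.lt_two_pow_self (n := n)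
    calc (n:ℝ) ≤ ((2^n : ℕ) : ℝ) := by exact_mod_cast this.le
      _ = (2:ℝ) ^ (n:ℤ) := by rw [zpow_natCast]; push_cast; ring
  have hnδ : (n:ℝ) * δ ≤ 1/4 := by
    calc (n:ℝ) * δ ≤ (2:ℝ) ^ (n:ℤ) * δ := by
          apply mul_le_mul_of_nonneg_right hnle hδpos.le
      _ = (2:ℝ) ^ ((n:ℤ) + -(n + k + 2 : ℤ)) := by rw [hδ_def, ← zpow_add₀ h2ne]
      _ ≤ (2:ℝ) ^ (-2 : ℤ) := zpow_le_zpow_right₀ one_le_two (by omega)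
      _ = 1/4 := by norm_num
  have hsum2 : (n:ℝ) * (2 * δ) ≤ (2:ℝ) ^ (-(k:ℤ) + -1) := by
    calc (n:ℝ) * (2 * δ) ≤ (2:ℝ) ^ (n:ℤ) * (2 * δ) := by
          apply mul_le_mul_of_nonneg_right hnle (by positivity)
      _ = (2:ℝ) ^ ((n:ℤ) + (1 + -(n + k + 2 : ℤ))) := by
          rw [hδ_def, zpow_add₀ h2ne ((n:ℤ)), zpow_add₀ h2ne (1:ℤ), zpow_one]
      _ ≤ (2:ℝ) ^ (-(k:ℤ) + -1) := zpow_le_zpow_right₀ one_le_two (by omega)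
  have hhalf : (2:ℝ) ^ (-(k:ℤ) + -1) < (2:ℝ) ^ (-(k:ℤ)) :=
    zpow_lt_zpow_right₀ one_lt_two (by omega)
  -- set up
  have hsmall : ∀ j, ‖p j - q j‖ ≤ 1/4 := fun j => le_trans (hclose j).le hδ4
  have hpair := fun j => my_pair (hp j).1 (hp j).2 (hq j).1 (hq j).2 (hsmall j)
  choose r hrmem hrsa hrP hrQ hrra hrar hrnorm using hpair
  set a : Fin n → A := fun j => 1 - (p j - q j) * (p j - q j) with ha_def
  have haS : ∀ j, IsSelfAdjoint (a j) := by
    intro j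
    have hd : IsSelfAdjoint (p j - q j) := (hp j).1.sub (hq j).1
    rw [ha_def, IsSelfAdjoint, star_sub, star_one, star_mul, hd.star_eq]
  set w : Fin n → A := fun j => r j * (p j * q j) with hw_def
  have hws : ∀ j, star (w j) = q j * (p j * r j) := by
    intro j
    simp only [hw_def, star_mul, (hp j).1.star_eq, (hq j).1.star_eq, (hrsa j).star_eq,
      mul_assoc]
  -- algebraic identities
  have hPa : ∀ j, p j * a j = p j * (q j * p j) := by
    intro j
    obtain ⟨h1, _⟩ := my_mul_dd (hp j).2 (hq j).2
    simp only [ha_def]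
    rw [mul_sub, mul_one, h1, mul_assoc]
    abel
  have hQa : ∀ j, q j * a j = q j * (p j * q j) := by
    intro j
    obtain ⟨h1, _⟩ := my_mul_dd (hq j).2 (hp j).2
    have e : (q j - p j) * (q j - p j) = (p j - q j) * (p j - q j) := by noncomm_ring
    rw [e] at h1
    simp only [ha_def]
    rw [mul_sub, mul_one, h1, mul_assoc]
    abel
  have hrA : ∀ j, Commute (a j) (r j) := fun j =>
    my_commute_of_mem_elemental (haS j) (Commute.refl _) (hrmem j)
  -- D1 : q * (p * (r * (r * q))) = q
  have hD1 : ∀ j, q j * (p j * (r j * (r j * q j))) = q j := by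
    intro j
    have step : q j * p j * (r j * r j) * q j = q j := by
      calc q j * p j * (r j * r j) * q j
          = q j * p j * ((r j * r j) * q j) := by rw [mul_assoc]
        _ = q j * p j * (q j * (r j * r j)) := by
            rw [((hrQ j).mul_right (hrQ j)).eq]
        _ = q j * p j * q j * (r j * r j) := by rw [← mul_assoc]
        _ = q j * (p j * q j) * (r j * r j) := by rw [mul_assoc (q j)]
        _ = q j * a j * (r j * r j) := by rw [← hQa j]
        _ = q j * (a j * (r j * r j)) := by rw [mul_assoc]
        _ = q j := by rw [hrar j, mul_one]
    calc q j * (p j * (r j * (r j * q j))) = q j * p j * (r j * r j) * q j := by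
          simp only [mul_assoc]
      _ = q j := step
  -- D2 : r * (p * (q * (p * r))) = p
  have hD2 : ∀ j, r j * (p j * (q j * (p j * r j))) = p j := by
    intro j
    have step : r j * (p j * a j) * r j = p j := by
      calc r j * (p j * a j) * r j
          = (r j * p j) * a j * r j := by rw [← mul_assoc]
        _ = (p j * r j) * a j * r j := by rw [← (hrP j).eq]
        _ = p j * (r j * a j) * r j := by rw [mul_assoc (p j)]
        _ = p j * (a j * r j) * r j := by rw [← (hrA j).eq]
        _ = p j * (a j * (r j * r j)) := by simp only [mul_assoc]
        _ = p j := by rw [hrar j, mul_one]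
    calc r j * (p j * (q j * (p j * r j)))
        = r j * (p j * (q j * p j)) * r j := by simp only [mul_assoc]
      _ = r j * (p j * a j) * r j := by rw [← hPa j]
      _ = p j := step
  -- basic vanishing / absorbing lemmas
  have hE7 : ∀ j, p j * w j = w j := by
    intro j
    simp only [hw_def]
    rw [← my_comm_aux (hrP j), my_idem_aux2 (hp j).2]
  have hE8 : ∀ j, w j * q j = w j := by
    intro j
    rw [hw_def]
    simp only [mul_assoc]
    rw [(hq j).2]
  have hE6 : ∀ i m, i ≠ m → p i * w m = 0 := by
    intro i m him
    simp only [hw_def]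
    rw [← my_comm_aux (hrP m) (q m), ← mul_assoc, hportho i m him, zero_mul]
  have hE5' : ∀ l i, l ≠ i → star (w l) * p i = 0 := by
    intro l i hli
    rw [hws l]
    simp only [mul_assoc]
    rw [my_comm_aux (hrP l), hportho l i hli, mul_zero, mul_zero]
  -- E1 : star w * w = q
  have hE1 : ∀ j, star (w j) * w j = q j := by
    intro j
    rw [hws j, hw_def]
    simp only [mul_assoc]
    rw [← my_comm_aux (hrP j) (q j), ← my_comm_aux (hrP j) (r j * q j),
      my_idem_aux2 (hp j).2]
    exact hD1 j
  -- E2 : star w i * w j = 0 for i ≠ j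
  have hE2 : ∀ i j, i ≠ j → star (w i) * w j = 0 := by
    intro i j hij
    have h := hE5' i j hij
    calc star (w i) * w j = star (w i) * (p j * w j) := by rw [hE7 j]
      _ = star (w i) * p j * w j := by rw [← mul_assoc]
      _ = 0 := by rw [h, zero_mul]
  -- E3 : w * star w = p
  have hE3 : ∀ j, w j * star (w j) = p j := by
    intro j
    rw [hws j, hw_def]
    simp only [mul_assoc]
    rw [my_idem_aux2 (hq j).2]
    exact hD2 j
  -- E4
  have hE4 : ∀ i j, i ≠ j → w i * star (w j) = 0 := by
    intro i j hij
    rw [hws j, hw_def]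
    simp only [mul_assoc]
    rw [my_zero_aux (hqortho i j hij), mul_zero, mul_zero]
  -- E5 : star w i * p i * w i = q i
  have hE5 : ∀ j, star (w j) * p j * w j = q j := by
    intro j
    rw [hws j, hw_def]
    simp only [mul_assoc]
    rw [← my_comm_aux (hrP j) (q j), my_idem_aux2 (hp j).2,
      ← my_comm_aux (hrP j) (r j * q j), my_idem_aux2 (hp j).2]
    exact hD1 j
  -- now the sums
  set v : A := ∑ j, w j with hv_def
  have hvstar : star v = ∑ j, star (w j) := by rw [hv_def, star_sum]
  have hv1 : star v * v = ∑ j, q j := by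
    rw [hvstar, hv_def, Finset.sum_mul_sum]
    apply Finset.sum_congr rfl
    intro i _
    rw [Finset.sum_eq_single i (fun b _ hb => hE2 i b (Ne.symm hb))
      (fun h => absurd (Finset.mem_univ i) h)]
    exact hE1 i
  have hv2 : v * star v = ∑ j, p j := by
    rw [hvstar, hv_def, Finset.sum_mul_sum]
    apply Finset.sum_congr rfl
    intro i _
    rw [Finset.sum_eq_single i (fun b _ hb => hE4 i b (Ne.symm hb))
      (fun h => absurd (Finset.mem_univ i) h)]
    exact hE3 i
  have hvp : ∀ i, star v * p i * v = q i := by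
    intro i
    have h1 : star v * p i = star (w i) * p i := by
      rw [hvstar, Finset.sum_mul]
      rw [Finset.sum_eq_single i (fun b _ hb => hE5' b i hb)
        (fun h => absurd (Finset.mem_univ i) h)]
    rw [h1, hv_def, Finset.mul_sum]
    rw [Finset.sum_eq_single i (fun b _ hb => by
      rw [mul_assoc, hE6 i b (Ne.symm hb) , mul_zero])
      (fun h => absurd (Finset.mem_univ i) h)]
    exact hE5 i
  have hpvq : ∀ i, p i * v * q i = w i := by
    intro i
    have h1 : p i * v = w i := by
      rw [hv_def, Finset.mul_sum]
      rw [Finset.sum_eq_single i (fun b _ hb => hE6 i b (Ne.symm hb))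
        (fun h => absurd (Finset.mem_univ i) h)]
      exact hE7 i
    rw [h1, hE8 i]
  -- membership
  have hmemv : v ∈ (StarAlgebra.adjoin ℂ
      (Set.range p ∪ Set.range q ∪ {1} : Set A)).topologicalClosure := by
    set S := StarAlgebra.adjoin ℂ (Set.range p ∪ Set.range q ∪ {1} : Set A) with hS_def
    have hpS : ∀ j, p j ∈ S := fun j =>
      StarAlgebra.subset_adjoin ℂ _ (Or.inl (Or.inl ⟨j, rfl⟩))
    have hqS : ∀ j, q j ∈ S := fun j =>
      StarAlgebra.subset_adjoin ℂ _ (Or.inl (Or.inr ⟨j, rfl⟩))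
    have haSmem : ∀ j, a j ∈ S := by
      intro j
      rw [ha_def]
      exact sub_mem (one_mem S) (mul_mem (sub_mem (hpS j) (hqS j)) (sub_mem (hpS j) (hqS j)))
    have hrT : ∀ j, r j ∈ S.topologicalClosure := by
      intro j
      have := StarAlgebra.elemental.le_of_mem (S := S.topologicalClosure)
        (StarSubalgebra.isClosed_topologicalClosure S)
        (StarSubalgebra.le_topologicalClosure S (haSmem j))
      exact this (hrmem j)
    rw [hv_def]
    apply sum_mem
    intro j _
    rw [hw_def]
    exact mul_mem (hrT j) (mul_mem (StarSubalgebra.le_topologicalClosure S (hpS j))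
      (StarSubalgebra.le_topologicalClosure S (hqS j)))
  -- norm bound per index
  have hwnorm : ∀ j, ‖p j - w j‖ ≤ ‖p j - q j‖ + ‖p j - q j‖ ^ 2 := by
    intro j
    have hdecomp : p j - w j = p j * (p j - q j) + (1 - r j) * (p j * q j) := by
      rw [hw_def]
      simp only []
      rw [mul_sub, (hp j).2, sub_mul, one_mul]
      abel
    rw [hdecomp]
    have hp1 : ‖p j‖ ≤ 1 := my_proj_norm_le_one (hp j).1 (hp j).2
    have hq1 : ‖q j‖ ≤ 1 := my_proj_norm_le_one (hq j).1 (hq j).2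
    have h1 : ‖p j * (p j - q j)‖ ≤ ‖p j - q j‖ := by
      calc ‖p j * (p j - q j)‖ ≤ ‖p j‖ * ‖p j - q j‖ := norm_mul_le _ _
        _ ≤ 1 * ‖p j - q j‖ := by
            apply mul_le_mul_of_nonneg_right hp1 (norm_nonneg _)
        _ = ‖p j - q j‖ := one_mul _
    have h2 : ‖(1 - r j) * (p j * q j)‖ ≤ ‖p j - q j‖ ^ 2 := by
      calc ‖(1 - r j) * (p j * q j)‖ ≤ ‖1 - r j‖ * ‖p j * q j‖ := norm_mul_le _ _
        _ ≤ ‖p j - q j‖ ^ 2 * (‖p j‖ * ‖q j‖) := by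
            apply mul_le_mul (hrnorm j) (norm_mul_le _ _) (norm_nonneg _) (by positivity)
        _ ≤ ‖p j - q j‖ ^ 2 * 1 := by
            apply mul_le_mul_of_nonneg_left _ (by positivity)
            calc ‖p j‖ * ‖q j‖ ≤ 1 * 1 := by
                  apply mul_le_mul hp1 hq1 (norm_nonneg _) (by norm_num)
              _ = 1 := one_mul 1
        _ = ‖p j - q j‖ ^ 2 := mul_one _
    calc ‖p j * (p j - q j) + (1 - r j) * (p j * q j)‖
        ≤ ‖p j * (p j - q j)‖ + ‖(1 - r j) * (p j * q j)‖ := norm_add_le _ _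
      _ ≤ ‖p j - q j‖ + ‖p j - q j‖ ^ 2 := add_le_add h1 h2
  have hwnorm2 : ∀ j, ‖p j - w j‖ ≤ 2 * δ := by
    intro j
    have h := hwnorm j
    have hc := (hclose j).le
    have h0 := norm_nonneg (p j - q j)
    nlinarith
  -- finish
  refine ⟨v, hmemv, ⟨?_, ?_⟩, hvp, ?_, ?_⟩
  · rw [hv1]
    rw [IsSelfAdjoint, star_sum]
    exact Finset.sum_congr rfl fun j _ => (hq j).1.star_eq
  · rw [hv1, Finset.sum_mul_sum]
    apply Finset.sum_congr rfl
    intro i _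
    rw [Finset.sum_eq_single i (fun b _ hb => hqortho i b (Ne.symm hb))
      (fun h => absurd (Finset.mem_univ i) h)]
    exact (hq i).2
  · intro j
    rw [hpvq j]
    have h := hwnorm j
    have hc := hclose j
    have h0 := norm_nonneg (p j - q j)
    have hd4 := hδ4
    calc ‖p j - w j‖ ≤ ‖p j - q j‖ + ‖p j - q j‖ ^ 2 := h
      _ < 2 * δ := by nlinarith
      _ ≤ (2:ℝ) ^ (-(k:ℤ)) := h2δ
  · intro hsump
    have hQsum_proj : (∑ j, q j) = 1 := by
      have hQsa : IsSelfAdjoint (∑ j, q j) := by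
        rw [IsSelfAdjoint, star_sum]
        exact Finset.sum_congr rfl fun j _ => (hq j).1.star_eq
      have he_sa : IsSelfAdjoint ((1:A) - ∑ j, q j) := (IsSelfAdjoint.one A).sub hQsa
      have he_idem : ((1:A) - ∑ j, q j) * ((1:A) - ∑ j, q j) = (1:A) - ∑ j, q j := by
        have hQQ : (∑ j, q j) * (∑ j, q j) = ∑ j, q j := by
          rw [Finset.sum_mul_sum]
          apply Finset.sum_congr rfl
          intro i _
          rw [Finset.sum_eq_single i (fun b _ hb => hqortho i b (Ne.symm hb))
            (fun h => absurd (Finset.mem_univ i) h)]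
          exact (hq i).2
        rw [sub_mul, mul_sub, mul_sub, hQQ]
        simp only [one_mul, mul_one]
        abel
      have he_norm : ‖(1:A) - ∑ j, q j‖ < 1 := by
        have h1 : (1:A) - ∑ j, q j = ∑ j, (p j - q j) := by
          rw [Finset.sum_sub_distrib, hsump]
        rw [h1]
        calc ‖∑ j, (p j - q j)‖ ≤ ∑ j, ‖p j - q j‖ := norm_sum_le _ _
          _ ≤ ∑ _j : Fin n, δ := Finset.sum_le_sum fun j _ => (hclose j).le
          _ = n * δ := by rw [Finset.sum_const, Finset.card_univ, Fintype.card_fin,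
              nsmul_eq_mul]
          _ ≤ 1/4 := hnδ
          _ < 1 := by norm_num
      have h0 := my_proj_small he_sa he_idem he_norm
      exact (sub_eq_zero.mp h0).symm
    refine ⟨?_, ?_, ?_⟩
    · rw [hv1, hQsum_proj]
    · rw [hv2, hsump]
    · have h1 : v - 1 = ∑ j, (w j - p j) := by
        rw [hv_def, Finset.sum_sub_distrib, hsump]
      rw [h1]
      calc ‖∑ j, (w j - p j)‖ ≤ ∑ j, ‖w j - p j‖ := norm_sum_le _ _
        _ ≤ ∑ _j : Fin n, 2 * δ := Finset.sum_le_sum fun j _ => by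
              rw [norm_sub_rev]; exact hwnorm2 j
        _ = n * (2 * δ) := by rw [Finset.sum_const, Finset.card_univ, Fintype.card_fin,
            nsmul_eq_mul]
        _ ≤ (2:ℝ) ^ (-(k:ℤ) + -1) := hsum2
        _ < (2:ℝ) ^ (-(k:ℤ)) := hhalf
end

section
/- Let A be a unital C*-algebra, n ≥ 1, and suppose p₁, …, pₙ are projections of A with ‖p_i p_j‖ < δ₁(ε, n) for all i ≠ j, where δ₁ is defined recursively by δ₁(ε, 1) = 1/2 and δ₁(ε, n+1) = min{1/3, ε/(48n), δ₁(ε/(48n), n)}. Then there exist mutually orthogonal projections q₁, …, qₙ of A such that ‖p_j − q_j‖ < ε for all j. -/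
/-- The function `δ₁` defined recursively by `δ₁(ε, 1) = 1/2` and
`δ₁(ε, n+1) = min {1/3, ε/(48n), δ₁(ε/(48n), n)}`. -/
noncomputable def delta1 : ℝ → ℕ → ℝ
  | _, 0 => 1 / 2
  | _, 1 => 1 / 2
  | ε, n + 2 =>
    min (1 / 3) (min (ε / (48 * ((n : ℝ) + 1))) (delta1 (ε / (48 * ((n : ℝ) + 1))) (n + 1)))


lemma spectrum_idem {A : Type*} [CStarAlgebra A] (p : A) (hp : p * p = p) :
    spectrum ℝ p ⊆ {0, 1} := by
  intro t ht
  by_contra h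
  simp only [Set.mem_insert_iff, Set.mem_singleton_iff] at h
  push_neg at h
  obtain ⟨h0, h1⟩ := h
  rw [spectrum.mem_iff] at ht
  apply ht
  have key : ∀ x y : A, x = t • 1 - p → y = ((t-1)⁻¹ * t⁻¹) • (t • 1 - 1 + p) → x * y = 1 ∧ y * x = 1 := by
    rintro x y rfl rfl
    constructor
    · rw [mul_smul_comm]
      have : ((t:ℝ) • (1:A) - p) * (t • 1 - 1 + p) = (t*(t-1)) • 1 := by
        simp only [mul_add, sub_mul, mul_sub, smul_mul_assoc, mul_smul_comm, hp, one_mul,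
          mul_one, smul_smul]
        module
      rw [this, smul_smul, show (t-1)⁻¹ * t⁻¹ * (t*(t-1)) = 1 by field_simp]
      simp
    · rw [smul_mul_assoc]
      have : ((t:ℝ) • (1:A) - 1 + p) * (t • 1 - p) = (t*(t-1)) • 1 := by
        simp only [mul_add, sub_mul, mul_sub, add_mul, smul_mul_assoc, mul_smul_comm, hp, one_mul,
          mul_one, smul_smul]
        module
      rw [this, smul_smul, show (t-1)⁻¹ * t⁻¹ * (t*(t-1)) = 1 by field_simp]
      simp
  obtain ⟨e1, e2⟩ := key _ _ rfl rfl
  rw [Algebra.algebraMap_eq_smul_one]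
  exact ⟨⟨t • 1 - p, _, e1, e2⟩, rfl⟩



lemma spec_near_s18 {A : Type*} [CStarAlgebra A] (p b : A) (hpsa : IsSelfAdjoint p)
    (hp : p * p = p) (t : ℝ) (ht : t ∈ spectrum ℝ b) : min |t| |t - 1| ≤ ‖b - p‖ := by
  by_contra hcon
  push_neg at hcon
  set d := ‖b - p‖ with hd
  set m := min |t| |t - 1| with hm
  have hm0 : 0 < m := lt_of_le_of_lt (norm_nonneg _) hcon
  have h0 : t ≠ 0 := fun h => by simp [hm, h] at hm0
  have h1 : t ≠ 1 := fun h => by simp [hm, h] at hm0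
  set g : ℝ → ℝ := fun s => (1 - s) * (-t⁻¹) + s * (1 - t)⁻¹ with hg
  have hgc : Continuous g := by fun_prop
  set u := cfc g p with hu
  have hps := spectrum_idem p hp
  have key : u * (p - t • 1) = 1 ∧ (p - t • 1) * u = 1 := by
    have e1 : p - t • 1 = cfc (fun s : ℝ => s - t) p := by
      rw [cfc_sub _ _ p (by fun_prop) (by fun_prop), cfc_id' ℝ p, cfc_const t p,
        Algebra.algebraMap_eq_smul_one]
    have e2 : ∀ s ∈ spectrum ℝ p, g s * (s - t) = 1 := by
      intro s hs
      rcases hps hs with rfl | rfl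
      · simp only [hg]; field_simp; ring
      · simp only [hg]
        rw [show (1 - (1:ℝ)) * (-t⁻¹) + 1 * (1-t)⁻¹ = (1-t)⁻¹ by ring]
        rw [show ((1:ℝ)-t)⁻¹ * (1 - t) = (1-t) * (1-t)⁻¹ by ring,
          mul_inv_cancel₀ (sub_ne_zero.2 (Ne.symm h1))]
    constructor
    · rw [hu, e1, ← cfc_mul _ _ p (by fun_prop) (by fun_prop), cfc_congr e2,
        cfc_const 1 p, map_one]
    · rw [hu, e1, ← cfc_mul _ _ p (by fun_prop) (by fun_prop),
        cfc_congr (fun s hs => (mul_comm (g s) (s - t)) ▸ e2 s hs),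
        cfc_const 1 p, map_one]
  have hun : ‖u‖ ≤ m⁻¹ := by
    apply norm_cfc_le (by positivity)
    intro s hs
    rcases hps hs with rfl | rfl
    · simp only [hg]
      rw [show (1 - (0:ℝ)) * (-t⁻¹) + 0 * (1-t)⁻¹ = -t⁻¹ by ring]
      rw [norm_neg, Real.norm_eq_abs, abs_inv]
      exact inv_anti₀ hm0 (min_le_left _ _)
    · simp only [hg]
      rw [show (1 - (1:ℝ)) * (-t⁻¹) + 1 * (1-t)⁻¹ = (1-t)⁻¹ by ring]
      rw [Real.norm_eq_abs, abs_inv, show |1 - t| = |t - 1| by rw [abs_sub_comm]]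
      exact inv_anti₀ hm0 (min_le_right _ _)
  have hsmall : ‖u * (b - p)‖ < 1 := by
    calc ‖u * (b - p)‖ ≤ ‖u‖ * d := norm_mul_le _ _
    _ ≤ m⁻¹ * d := mul_le_mul_of_nonneg_right hun (norm_nonneg _)
    _ < m⁻¹ * m := mul_lt_mul_of_pos_left hcon (by positivity)
    _ = 1 := inv_mul_cancel₀ hm0.ne'
  have hunit2 : IsUnit (1 + u * (b - p)) := by
    have := (Units.oneSub (-(u * (b - p))) (by rwa [norm_neg])).isUnit
    simpa [sub_neg_eq_add] using this
  have hfact : b - t • 1 = (p - t • 1) * (1 + u * (b - p)) := by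
    rw [mul_add, mul_one, ← mul_assoc, key.2, one_mul]
    abel
  have hunit : IsUnit (b - t • 1) := by
    rw [hfact]
    exact IsUnit.mul (⟨⟨p - t • 1, u, key.2, key.1⟩, rfl⟩ : IsUnit (p - t • 1)) hunit2
  rw [spectrum.mem_iff] at ht
  apply ht
  rw [Algebra.algebraMap_eq_smul_one]
  simpa using hunit.neg



lemma perturb {A : Type*} [CStarAlgebra A] (b pr : A) (hb : IsSelfAdjoint b)
    (hpr : IsSelfAdjoint pr) (hpr2 : pr * pr = pr) (r : ℝ) (hr0 : 0 < r) (hr : r < 1/2)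
    (hclose : ‖b - pr‖ < r) :
    ∃ q' u : A, IsSelfAdjoint q' ∧ q' * q' = q' ∧ ‖b - q'‖ ≤ r ∧ q' = b * u ∧ q' = u * b := by
  set f : ℝ → ℝ := fun s => min 1 (max 0 ((s - r)/(1 - 2*r))) with hf
  set h : ℝ → ℝ := fun s => f s / max s r with hh
  have h2r : 0 < 1 - 2*r := by linarith
  have hfc : Continuous f := by fun_prop
  have hhc : Continuous h := by
    apply hfc.div (continuous_id.max continuous_const)
    intro s
    exact ne_of_gt (lt_of_lt_of_le hr0 (le_max_right _ _))
  have hsf : ∀ s, f s = s * h s := by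
    intro s
    rcases le_or_gt s r with hs | hs
    · have hf0 : f s = 0 := by
        simp only [hf]
        rw [max_eq_left (by apply div_nonpos_of_nonpos_of_nonneg <;> linarith), min_eq_right zero_le_one]
      rw [hf0, hh]
      simp [hf0]
    · have : max s r = s := max_eq_left hs.le
      rw [hh]
      simp only [this]
      rw [mul_div_cancel₀ _ (ne_of_gt (hr0.trans hs))]
  have hspec : ∀ s ∈ spectrum ℝ b, s < r ∨ 1 - r < s := by
    intro s hs
    have := spec_near_s18 pr b hpr hpr2 s hs
    have hlt : min |s| |s-1| < r := lt_of_le_of_lt this hclose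
    rcases min_lt_iff.mp hlt with h' | h'
    · left; exact lt_of_le_of_lt (le_abs_self s) h'
    · right; have := abs_lt.mp h'; linarith
  have hidem : ∀ s ∈ spectrum ℝ b, f s ∈ ({0, 1} : Set ℝ) := by
    intro s hs
    rcases hspec s hs with h' | h'
    · left
      simp only [hf]
      rw [max_eq_left (by apply div_nonpos_of_nonpos_of_nonneg <;> linarith),
        min_eq_right zero_le_one]
    · right
      show f s = 1
      simp only [hf]
      rw [min_eq_left (le_max_iff.mpr (Or.inr (by rw [le_div_iff₀ h2r]; linarith)))]
  have hdist : ∀ s ∈ spectrum ℝ b, |s - f s| ≤ r := by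
    intro s hs
    rcases hidem s hs with h' | h'
    · rw [h', sub_zero]
      rcases hspec s hs with h2 | h2
      · rw [abs_le]
        constructor
        · by_contra hneg
          push_neg at hneg
          have := spec_near_s18 pr b hpr hpr2 s hs
          have hlt : min |s| |s-1| < r := lt_of_le_of_lt this hclose
          rcases min_lt_iff.mp hlt with h3 | h3
          · rw [abs_lt] at h3; linarith
          · rw [abs_lt] at h3; linarith
        · exact h2.le
      · exfalso
        have h1 : f s = 1 := by
          simp only [hf]
          rw [min_eq_left (le_max_iff.mpr (Or.inr (by rw [le_div_iff₀ h2r]; linarith)))]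
        rw [h'] at h1; norm_num at h1
    · rw [Set.mem_singleton_iff] at h'
      rw [h']
      have := spec_near_s18 pr b hpr hpr2 s hs
      have hlt : min |s| |s-1| < r := lt_of_le_of_lt this hclose
      rcases hspec s hs with h2 | h2
      · exfalso
        have h0 : f s = 0 := by
          simp only [hf]
          rw [max_eq_left (by apply div_nonpos_of_nonpos_of_nonneg <;> linarith),
            min_eq_right zero_le_one]
        rw [h'] at h0; norm_num at h0
      · rcases min_lt_iff.mp hlt with h3 | h3
        · rw [abs_lt] at h3; exfalso; linarith
        · exact h3.le
  refine ⟨cfc f b, cfc h b, cfc_predicate f b, ?_, ?_, ?_, ?_⟩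
  · rw [← cfc_mul f f b (by fun_prop) (by fun_prop)]
    apply cfc_congr
    intro s hs
    show f s * f s = f s
    rcases hidem s hs with h' | h'
    · rw [h']; ring
    · rw [Set.mem_singleton_iff] at h'; rw [h']; ring
  · have : b - cfc f b = cfc (fun s => s - f s) b := by
      rw [cfc_sub (fun s : ℝ => s) f b (by fun_prop) (by fun_prop), cfc_id' ℝ b]
    rw [this]
    exact norm_cfc_le hr0.le (fun s hs => by rw [Real.norm_eq_abs]; exact hdist s hs)
  · conv_lhs => rw [show f = fun s => s * h s from funext hsf]
    rw [cfc_mul _ h b (by fun_prop) (by fun_prop), cfc_id' ℝ b]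
  · conv_lhs => rw [show f = fun s => s * h s from funext hsf]
    rw [show (fun s : ℝ => s * h s) = fun s => h s * s from funext fun s => mul_comm _ _]
    rw [cfc_mul h _ b (by fun_prop) (by fun_prop), cfc_id' ℝ b]

lemma proj_norm_le_one {A : Type*} [CStarAlgebra A] {p : A} (h1 : IsSelfAdjoint p)
    (h2 : p * p = p) : ‖p‖ ≤ 1 := by
  have e : ‖p‖ * ‖p‖ = ‖p‖ := by
    conv_rhs => rw [← h2]
    conv_lhs => rw [← CStarRing.norm_star_mul_self (x := p), h1.star_eq]
  nlinarith [norm_nonneg p]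

lemma delta1_succ (ε : ℝ) (n : ℕ) (hn : 1 ≤ n) :
    delta1 ε (n+1) = min (1/3) (min (ε / (48 * n)) (delta1 (ε / (48 * n)) n)) := by
  rcases Nat.exists_eq_succ_of_ne_zero (by omega : n ≠ 0) with ⟨m, rfl⟩
  rw [show m + 1 + 1 = m + 2 from rfl, delta1]
  push_cast
  ring_nf
  rw [Nat.add_comm 1 m]


lemma main_aux {A : Type*} [CStarAlgebra A] :
    ∀ n : ℕ, 1 ≤ n → ∀ ε : ℝ, 0 < ε → ε < 1 → ∀ p : Fin n → A,
    (∀ j, IsSelfAdjoint (p j) ∧ p j * p j = p j) →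
    (∀ i j, i ≠ j → ‖p i * p j‖ < delta1 ε n) →
    ∃ q : Fin n → A, (∀ j, IsSelfAdjoint (q j) ∧ q j * q j = q j) ∧
      (∀ i j, i ≠ j → q i * q j = 0) ∧ ∀ j, ‖p j - q j‖ < ε := by
  intro n hn
  induction n, hn using Nat.le_induction with
  | base =>
    intro ε hε0 hε1 p hp hclose
    exact ⟨p, hp, fun i j hij => absurd (Subsingleton.elim i j) hij,
      fun j => by simpa using hε0⟩
  | succ n hn ih =>
    intro ε hε0 hε1 p hp hclose
    have hn' : (1:ℝ) ≤ (n:ℝ) := by exact_mod_cast hn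
    set ε' : ℝ := ε / (48 * (n:ℝ)) with hε'
    have hε'0 : 0 < ε' := by positivity
    have hε'1 : ε' < 1 := by
      rw [hε', div_lt_one (by positivity)]
      nlinarith
    have hε'ε : ε' < ε := by
      rw [hε', div_lt_iff₀ (by positivity)]
      nlinarith
    have hδ1 : delta1 ε (n+1) ≤ ε' := by
      rw [delta1_succ ε n hn]
      exact le_trans (min_le_right _ _) (min_le_left _ _)
    have hδ2 : delta1 ε (n+1) ≤ delta1 ε' n := by
      rw [delta1_succ ε n hn]
      exact le_trans (min_le_right _ _) (min_le_right _ _)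
    set p0 : Fin n → A := fun j => p j.castSucc with hp0def
    set P : A := p (Fin.last n) with hPdef
    have hP := hp (Fin.last n)
    obtain ⟨q0, hq0, horth0, hnorm0⟩ := ih ε' hε'0 hε'1 p0
      (fun j => hp j.castSucc)
      (fun i j hij => lt_of_lt_of_le
        (hclose i.castSucc j.castSucc (fun h => hij (Fin.castSucc_injective n h))) hδ2)
    set q : A := ∑ j, q0 j with hqdef
    have hq1 : IsSelfAdjoint q := by
      rw [IsSelfAdjoint, hqdef, star_sum]
      exact Finset.sum_congr rfl fun j _ => (hq0 j).1.star_eq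
    have hq2 : q * q = q := by
      rw [hqdef, Finset.sum_mul_sum]
      apply Finset.sum_congr rfl
      intro i _
      rw [Finset.sum_eq_single i (fun j _ hj => horth0 i j (Ne.symm hj)) (by simp), (hq0 i).2]
    have hqn : ‖q‖ ≤ 1 := proj_norm_le_one hq1 hq2
    have hqq0 : ∀ j, q * q0 j = q0 j := by
      intro j
      rw [hqdef, Finset.sum_mul]
      rw [Finset.sum_eq_single j (fun i _ hi => horth0 i j hi) (by simp), (hq0 j).2]
    have hq0q : ∀ j, q0 j * q = q0 j := by
      intro j
      rw [hqdef, Finset.mul_sum]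
      rw [Finset.sum_eq_single j (fun i _ hi => horth0 j i (Ne.symm hi)) (by simp), (hq0 j).2]
    have hPn : ‖P‖ ≤ 1 := proj_norm_le_one hP.1 hP.2
    have hterm : ∀ j : Fin n, ‖q0 j * P‖ < 2 * ε' := by
      intro j
      have h1 : ‖q0 j * P‖ ≤ ‖(q0 j - p0 j) * P‖ + ‖p0 j * P‖ := by
        calc ‖q0 j * P‖ = ‖(q0 j - p0 j) * P + p0 j * P‖ := by
              congr 1; noncomm_ring
        _ ≤ _ := norm_add_le _ _
      have h2 : ‖(q0 j - p0 j) * P‖ ≤ ‖q0 j - p0 j‖ * ‖P‖ := norm_mul_le _ _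
      have h3 : ‖q0 j - p0 j‖ < ε' := by rw [norm_sub_rev]; exact hnorm0 j
      have h4 : ‖p0 j * P‖ < ε' :=
        lt_of_lt_of_le (hclose j.castSucc (Fin.last n) (Fin.castSucc_lt_last j).ne) hδ1
      nlinarith [norm_nonneg (q0 j - p0 j), norm_nonneg P]
    have hterm' : ∀ j : Fin n, ‖P * q0 j‖ < 2 * ε' := by
      intro j
      have h1 : ‖P * q0 j‖ ≤ ‖P * (q0 j - p0 j)‖ + ‖P * p0 j‖ := by
        calc ‖P * q0 j‖ = ‖P * (q0 j - p0 j) + P * p0 j‖ := by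
              congr 1; noncomm_ring
        _ ≤ _ := norm_add_le _ _
      have h2 : ‖P * (q0 j - p0 j)‖ ≤ ‖P‖ * ‖q0 j - p0 j‖ := norm_mul_le _ _
      have h3 : ‖q0 j - p0 j‖ < ε' := by rw [norm_sub_rev]; exact hnorm0 j
      have h4 : ‖P * p0 j‖ < ε' :=
        lt_of_lt_of_le (hclose (Fin.last n) j.castSucc (Fin.castSucc_lt_last j).ne') hδ1
      nlinarith [norm_nonneg (q0 j - p0 j), norm_nonneg P]
    have hsum : ∀ (f : Fin n → A), (∀ j, ‖f j‖ < 2 * ε') → ‖∑ j, f j‖ < ε / 24 := by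
      intro f hf
      calc ‖∑ j, f j‖ ≤ ∑ j, ‖f j‖ := norm_sum_le _ _
      _ < ∑ _j : Fin n, 2 * ε' := by
          apply Finset.sum_lt_sum_of_nonempty
          · exact Finset.univ_nonempty_iff.mpr (Fin.pos_iff_nonempty.mp (by omega))
          · exact fun j _ => hf j
      _ = (n:ℝ) * (2 * ε') := by rw [Finset.sum_const, Finset.card_univ, Fintype.card_fin,
            nsmul_eq_mul]
      _ = ε / 24 := by rw [hε']; field_simp; ring
    have hqP : ‖q * P‖ < ε / 24 := by
      rw [hqdef, Finset.sum_mul]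
      exact hsum _ hterm
    have hPq : ‖P * q‖ < ε / 24 := by
      rw [hqdef, Finset.mul_sum]
      exact hsum _ hterm'
    set b : A := (1 - q) * P * (1 - q) with hbdef
    have hb : IsSelfAdjoint b := by
      rw [IsSelfAdjoint, hbdef]
      simp only [star_mul, star_sub, star_one, hq1.star_eq, hP.1.star_eq]
      rw [mul_assoc, show star P = P from hP.1.star_eq]
    have hbP : ‖b - P‖ < ε / 8 := by
      have e : b - P = q * P * q - q * P - P * q := by rw [hbdef]; noncomm_ring
      have h1 : ‖q * P * q‖ ≤ ‖q * P‖ := by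
        calc ‖q * P * q‖ ≤ ‖q * P‖ * ‖q‖ := norm_mul_le _ _
        _ ≤ ‖q * P‖ := mul_le_of_le_one_right (norm_nonneg _) hqn
      calc ‖b - P‖ = ‖q * P * q - q * P - P * q‖ := by rw [e]
      _ ≤ ‖q * P * q - q * P‖ + ‖P * q‖ := norm_sub_le _ _
      _ ≤ ‖q * P * q‖ + ‖q * P‖ + ‖P * q‖ := by
          have := norm_sub_le (q * P * q) (q * P); linarith
      _ < ε / 8 := by linarith
    have hbq : b * q = 0 := by
      have : (1 - q) * q = 0 := by rw [sub_mul, one_mul, hq2, sub_self]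
      rw [hbdef, mul_assoc, this, mul_zero]
    have hqb : q * b = 0 := by
      have h0 : q * (1 - q) = 0 := by rw [mul_sub, mul_one, hq2, sub_self]
      rw [hbdef, ← mul_assoc, ← mul_assoc, h0, zero_mul, zero_mul]
    obtain ⟨q', u, hq'sa, hq'2, hq'b, hq'bu, hq'ub⟩ :=
      perturb b P hb hP.1 hP.2 (ε/8) (by positivity) (by linarith) hbP
    have hq'q : q' * q = 0 := by rw [hq'ub, mul_assoc, hbq, mul_zero]
    have hqq' : q * q' = 0 := by rw [hq'bu, ← mul_assoc, hqb, zero_mul]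
    refine ⟨Fin.snoc q0 q', ?_, ?_, ?_⟩
    · intro j
      rcases Fin.eq_castSucc_or_eq_last j with ⟨j', rfl⟩ | rfl
      · simpa [Fin.snoc_castSucc] using hq0 j'
      · simpa [Fin.snoc_last] using ⟨hq'sa, hq'2⟩
    · intro i j hij
      rcases Fin.eq_castSucc_or_eq_last i with ⟨i', rfl⟩ | rfl <;>
        rcases Fin.eq_castSucc_or_eq_last j with ⟨j', rfl⟩ | rfl
      · rw [Fin.snoc_castSucc, Fin.snoc_castSucc]
        exact horth0 i' j' (fun h => hij (congrArg Fin.castSucc h))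
      · rw [Fin.snoc_castSucc, Fin.snoc_last]
        rw [← hq0q i', mul_assoc, hqq', mul_zero]
      · rw [Fin.snoc_last, Fin.snoc_castSucc]
        rw [← hqq0 j', ← mul_assoc, hq'q, zero_mul]
      · exact absurd rfl hij
    · intro j
      rcases Fin.eq_castSucc_or_eq_last j with ⟨j', rfl⟩ | rfl
      · rw [Fin.snoc_castSucc]
        exact lt_trans (hnorm0 j') hε'ε
      · rw [Fin.snoc_last]
        calc ‖p (Fin.last n) - q'‖ = ‖(P - b) + (b - q')‖ := by rw [← hPdef]; congr 1; abel
        _ ≤ ‖P - b‖ + ‖b - q'‖ := norm_add_le _ _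
        _ < ε / 8 + ε / 8 := by
            rw [norm_sub_rev]
            exact add_lt_add_of_lt_of_le hbP hq'b
        _ < ε := by linarith


/-- Projections that pairwise almost-commute to zero (within `δ₁(ε, n)`)
can be perturbed within `ε` to mutually orthogonal projections. -/
theorem stmt18 {A : Type*} [CStarAlgebra A] (ε : ℝ) (hε0 : 0 < ε) (hε1 : ε < 1)
    (n : ℕ) (hn : 1 ≤ n) (p : Fin n → A)
    (hp : ∀ j, IsSelfAdjoint (p j) ∧ p j * p j = p j)
    (hclose : ∀ i j, i ≠ j → ‖p i * p j‖ < delta1 ε n) :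
    ∃ q : Fin n → A, (∀ j, IsSelfAdjoint (q j) ∧ q j * q j = q j) ∧
      (∀ i j, i ≠ j → q i * q j = 0) ∧ ∀ j, ‖p j - q j‖ < ε :=
  main_aux n hn ε hε0 hε1 p hp hclose
end
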